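/- arXiv:1705.08751 — 4 statements merged into one kernel-verified Lean document; each statement's English description precedes it below -/
import Mathlib

section
/- Let D and x be elements of an associative algebra such that {D, x} = Dx + xD equals 2E + c for a scalar c and an element E with [E, D] = −D and [E, x] = x. Then the element S = ½([D,x] − 1) anticommutes with both D and x: SD + DS = 0 and Sx + xS = 0. -/
theorem scasimir_anticommutes {A : Type*} [Ring A] [Algebra ℂ A]
    (D x E : A) (c : ℂ)
    (hED : E * D - D * E = -D) (hEx : E * x - x * E = x)
    (hDx : D * x + x * D = 2 * E + algebraMap ℂ A c) :
    let S := ((1 : ℂ)/2) • (D * x - x * D - 1)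
    S * D + D * S = 0 ∧ S * x + x * S = 0 := by
  intro S
  have hcD : algebraMap ℂ A c * D = D * algebraMap ℂ A c := (Algebra.commutes c D).symm.symm
  have hcx : algebraMap ℂ A c * x = x * algebraMap ℂ A c := (Algebra.commutes c x).symm.symm
  have h1 : D * (D * x + x * D) = D * (2 * E + algebraMap ℂ A c) := by rw [hDx]
  have h2 : (D * x + x * D) * D = (2 * E + algebraMap ℂ A c) * D := by rw [hDx]
  have h3 : x * (D * x + x * D) = x * (2 * E + algebraMap ℂ A c) := by rw [hDx]
  have h4 : (D * x + x * D) * x = (2 * E + algebraMap ℂ A c) * x := by rw [hDx]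
  have keyD : (D * x - x * D - 1) * D + D * (D * x - x * D - 1) = 0 := by
    linear_combination (norm := noncomm_ring) h1 - h2 - 2 * hED - hcD
  have keyx : (D * x - x * D - 1) * x + x * (D * x - x * D - 1) = 0 := by
    linear_combination (norm := noncomm_ring) h4 - h3 + 2 * hEx + hcx
  constructor
  · show ((1 : ℂ)/2) • (D * x - x * D - 1) * D + D * (((1 : ℂ)/2) • (D * x - x * D - 1)) = 0
    rw [smul_mul_assoc, mul_smul_comm, ← smul_add, keyD, smul_zero]
  · show ((1 : ℂ)/2) • (D * x - x * D - 1) * x + x * (((1 : ℂ)/2) • (D * x - x * D - 1)) = 0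
    rw [smul_mul_assoc, mul_smul_comm, ← smul_add, keyx, smul_zero]
end

section
/- Let D̃ and x̃ be operators satisfying [D̃, x̃²] = 2x̃, {D̃, x̃} = 2(Ẽ + 1 + 3κ) with [Ẽ, x̃] = x̃ and [Ẽ, D̃] = −D̃, and let M_k be a vector with D̃M_k = 0 and ẼM_k = kM_k. Then for nonnegative integers α, β, D̃^{2α} x̃^{2β} M_k = 2^{2α}(−β)_α(−β−k−3κ)_α · x̃^{2β−2α} M_k whenever α ≤ β. -/
theorem dirac_power_identity {V : Type*} [AddCommGroup V] [Module ℝ V]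
    (κ : ℝ) (k : ℕ) (D X E : Module.End ℝ V) (M : V)
    (hDx2 : D * X ^ 2 - X ^ 2 * D = (2 : ℝ) • X)
    (hanti : D * X + X * D = (2 : ℝ) • E + (2 + 6 * κ) • (1 : Module.End ℝ V))
    (hEx : E * X - X * E = X) (hED : E * D - D * E = -D)
    (hDM : D M = 0) (hEM : E M = (k : ℝ) • M) :
    ∀ α β : ℕ, α ≤ β →
      (D ^ (2 * α)) ((X ^ (2 * β)) M) =
        (2 ^ (2 * α) * (ascPochhammer ℝ α).eval (-(β : ℝ)) *
          (ascPochhammer ℝ α).eval (-(β : ℝ) - k - 3 * κ)) •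
          ((X ^ (2 * β - 2 * α)) M) := by
  have hDX : D * X = (2 : ℝ) • E + (2 + 6 * κ) • (1 : Module.End ℝ V) - X * D :=
    eq_sub_of_add_eq hanti
  have hEX : E * X = X + X * E := sub_eq_iff_eq_add.mp hEx
  have hpow : ∀ (n : ℕ) (v : V), (X ^ (n + 1)) v = X ((X ^ n) v) := by
    intro n v
    rw [pow_succ', Module.End.mul_apply]
  have hE : ∀ n : ℕ, E ((X ^ n) M) = ((n : ℝ) + k) • (X ^ n) M := by
    intro n
    induction n with
    | zero => simpa using hEM
    | succ n ih =>
      have h2 : E ((X ^ (n + 1)) M) = X (E ((X ^ n) M)) + X ((X ^ n) M) := by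
        rw [hpow, ← Module.End.mul_apply E X, hEX]
        simp [LinearMap.add_apply, Module.End.mul_apply, add_comm]
      rw [h2, ih, map_smul, ← hpow]
      push_cast
      module
  have step : ∀ n : ℕ, D ((X ^ (n + 1)) M) =
      (2 * ((n : ℝ) + k) + 2 + 6 * κ) • (X ^ n) M - X (D ((X ^ n) M)) := by
    intro n
    rw [hpow, ← Module.End.mul_apply D X, hDX]
    simp only [LinearMap.sub_apply, LinearMap.add_apply, LinearMap.smul_apply,
      Module.End.one_apply, Module.End.mul_apply, hE]
    push_cast
    module
  have hD : ∀ b : ℕ, D ((X ^ (2 * b)) M) = ((2 * b : ℕ) : ℝ) • (X ^ (2 * b - 1)) M ∧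
      D ((X ^ (2 * b + 1)) M) = ((2 * b : ℝ) + 2 * k + 2 + 6 * κ) • (X ^ (2 * b)) M := by
    intro b
    induction b with
    | zero =>
      constructor
      · simpa using hDM
      · have := step 0
        rw [this]
        simp [hDM]
    | succ b ih =>
      obtain ⟨ih1, ih2⟩ := ih
      have h1 : D ((X ^ (2 * (b + 1))) M) = ((2 * (b + 1) : ℕ) : ℝ) • (X ^ (2 * (b + 1) - 1)) M := by
        have e : 2 * (b + 1) = (2 * b + 1) + 1 := by ring
        rw [e, step, ih2, map_smul]
        have e2 : (2 * b + 1) + 1 - 1 = 2 * b + 1 := rfl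
        rw [← hpow]
        push_cast
        module
      refine ⟨h1, ?_⟩
      have e : 2 * (b + 1) + 1 = (2 * (b + 1)) + 1 := rfl
      rw [e, step, h1, map_smul, ← hpow]
      have e3 : 2 * (b + 1) - 1 + 1 = 2 * (b + 1) := by omega
      rw [e3]
      push_cast
      module
  intro α
  induction α with
  | zero =>
    intro β hβ
    simp
  | succ α ih =>
    intro β hβ
    obtain ⟨b, rfl⟩ : ∃ b, β = b + 1 := ⟨β - 1, by omega⟩
    have hαb : α ≤ b := by omega
    have e1 : (D ^ (2 * (α + 1))) ((X ^ (2 * (b + 1))) M) =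
        (D ^ (2 * α)) (D (D ((X ^ (2 * (b + 1))) M))) := by
      have e : 2 * (α + 1) = (2 * α + 1) + 1 := by ring
      rw [e, pow_succ, pow_succ, Module.End.mul_apply, Module.End.mul_apply]
    have e2 : 2 * (b + 1) - 1 = 2 * b + 1 := by omega
    rw [e1, (hD (b + 1)).1, e2, map_smul, (hD b).2, map_smul, map_smul, ih b hαb]
    have e3 : 2 * b - 2 * α = 2 * (b + 1) - 2 * (α + 1) := by omega
    rw [e3, smul_smul, smul_smul]
    congr 1
    have poch : ∀ x : ℝ, (ascPochhammer ℝ (α + 1)).eval x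
        = x * (ascPochhammer ℝ α).eval (x + 1) := by
      intro x
      rw [ascPochhammer_succ_left]
      simp [Polynomial.eval_comp]
    rw [poch, poch]
    have c1 : (-((b : ℝ) + 1) + 1) = -(b : ℝ) := by ring
    have c2 : (-((b : ℝ) + 1) - k - 3 * κ + 1) = -(b : ℝ) - k - 3 * κ := by ring
    push_cast
    rw [c1, c2]
    ring
end

section
/- Let D̃ and e_w be operators on a space of polynomial-valued vectors in variables (u,v,w) such that D̃ involves only u,v (so [∂_w, D̃] = 0) and e_w D̃ = −D̃ e_w with e_w² = 1. Then for any vector-valued polynomial p of degree n in (u,v), the finite sum CK[p] = Σ_{a=0}^{n} ((−1)^a/a!) wᵃ (e_w D̃)ᵃ p satisfies (D̃ + e_w ∂_w) CK[p] = 0 whenever D̃^{n+1} p = 0. -/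
open Finset

theorem CK_extension_monogenic {V : Type*} [AddCommGroup V] [Module ℝ V]
    (D ew dw w : Module.End ℝ V) (n : ℕ) (p : V)
    -- ∂_w commutes with D̃ and with e_w
    (hdwD : dw * D = D * dw) (hdwew : dw * ew = ew * dw)
    -- e_w anticommutes with D̃ and squares to 1
    (hewD : ew * D = -(D * ew)) (hew2 : ew * ew = 1)
    -- D̃ involves only u,v, so it commutes with multiplication by w; so does e_w
    (hDw : D * w = w * D) (heww : ew * w = w * ew)
    -- the Heisenberg relation [∂_w, w] = 1
    (hheis : dw * w - w * dw = 1)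
    -- p does not depend on w, and D̃^{n+1} annihilates p (p has degree n in (u,v))
    (hdwp : dw p = 0) (hDp : (D ^ (n + 1)) p = 0) :
    (D + ew * dw)
      (∑ a ∈ range (n + 1),
        ((-1 : ℝ) ^ a / (Nat.factorial a)) • ((w ^ a * (ew * D) ^ a) p)) = 0 := by
  have hDew : D * ew = -(ew * D) := by rw [hewD, neg_neg]
  -- operator-level commutation lemmas
  have cDw : ∀ k : ℕ, D * w ^ k = w ^ k * D := fun k => (Commute.pow_right hDw k)
  have cEww : ∀ k : ℕ, ew * w ^ k = w ^ k * ew := fun k => (Commute.pow_right heww k)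
  have cdwE : dw * (ew * D) = (ew * D) * dw := by
    calc dw * (ew * D) = (dw * ew) * D := by rw [mul_assoc]
      _ = ew * (dw * D) := by rw [hdwew, mul_assoc]
      _ = (ew * D) * dw := by rw [hdwD, ← mul_assoc]
  have cdwEk : ∀ k : ℕ, dw * (ew * D) ^ k = (ew * D) ^ k * dw :=
    fun k => (Commute.pow_right cdwE k)
  have hDalt : ∀ k : ℕ, D * (ew * D) ^ k = ((-1 : ℝ) ^ k) • ((ew * D) ^ k * D) := by
    intro k
    induction k with
    | zero => simp
    | succ b ih =>
      have h1 : D * (ew * D) = -((ew * D) * D) := by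
        rw [← mul_assoc, hDew, neg_mul]
      calc D * (ew * D) ^ (b + 1) = (D * (ew * D)) * (ew * D) ^ b := by
            rw [pow_succ', ← mul_assoc]
        _ = -((ew * D) * (D * (ew * D) ^ b)) := by rw [h1, neg_mul, mul_assoc]
        _ = -((ew * D) * (((-1 : ℝ) ^ b) • ((ew * D) ^ b * D))) := by rw [ih]
        _ = ((-1 : ℝ) ^ (b + 1)) • ((ew * D) ^ (b + 1) * D) := by
            rw [mul_smul_comm, ← mul_assoc, ← pow_succ', ← neg_smul, pow_succ]
            ring_nf
  have hDkew : ∀ k : ℕ, D ^ k * ew = ((-1 : ℝ) ^ k) • (ew * D ^ k) := by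
    intro k
    induction k with
    | zero => simp
    | succ b ih =>
      calc D ^ (b + 1) * ew = D * (D ^ b * ew) := by rw [pow_succ', mul_assoc]
        _ = D * (((-1 : ℝ) ^ b) • (ew * D ^ b)) := by rw [ih]
        _ = ((-1 : ℝ) ^ b) • ((D * ew) * D ^ b) := by rw [mul_smul_comm, mul_assoc]
        _ = ((-1 : ℝ) ^ b) • (-((ew * D) * D ^ b)) := by rw [hDew, neg_mul]
        _ = ((-1 : ℝ) ^ (b + 1)) • (ew * D ^ (b + 1)) := by
            rw [mul_assoc, ← pow_succ', smul_neg, ← neg_smul]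
            congr 1
            rw [pow_succ]
            ring
  have hdwW : ∀ k : ℕ, dw * w ^ (k + 1) = w ^ (k + 1) * dw + ((k : ℝ) + 1) • w ^ k := by
    intro k
    have h1 : dw * w = w * dw + 1 := by rw [← hheis]; abel
    induction k with
    | zero => simpa using h1
    | succ b ih =>
      calc dw * w ^ (b + 2) = (dw * w ^ (b + 1)) * w := by rw [pow_succ, mul_assoc]
        _ = (w ^ (b + 1) * dw + ((b : ℝ) + 1) • w ^ b) * w := by rw [ih]
        _ = w ^ (b + 1) * (dw * w) + ((b : ℝ) + 1) • w ^ (b + 1) := by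
            rw [add_mul, smul_mul_assoc, mul_assoc, ← pow_succ]
        _ = w ^ (b + 1) * (w * dw + 1) + ((b : ℝ) + 1) • w ^ (b + 1) := by rw [h1]
        _ = w ^ (b + 1 + 1) * dw + ((↑(b + 1) : ℝ) + 1) • w ^ (b + 1) := by
            rw [mul_add, ← mul_assoc, ← pow_succ, mul_one]
            push_cast
            module
  -- pointwise versions
  have pDw : ∀ (k : ℕ) (x : V), D ((w ^ k) x) = (w ^ k) (D x) := by
    intro k x
    have := DFunLike.congr_fun (cDw k) x
    simpa [Module.End.mul_apply] using this
  have pEww : ∀ (k : ℕ) (x : V), ew ((w ^ k) x) = (w ^ k) (ew x) := by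
    intro k x
    have := DFunLike.congr_fun (cEww k) x
    simpa [Module.End.mul_apply] using this
  have pDalt : ∀ (k : ℕ) (x : V),
      D (((ew * D) ^ k) x) = ((-1 : ℝ) ^ k) • ((ew * D) ^ k) (D x) := by
    intro k x
    have := DFunLike.congr_fun (hDalt k) x
    simpa [Module.End.mul_apply, LinearMap.smul_apply] using this
  have pdwE : ∀ (k : ℕ) (x : V), dw (((ew * D) ^ k) x) = ((ew * D) ^ k) (dw x) := by
    intro k x
    have := DFunLike.congr_fun (cdwEk k) x
    simpa [Module.End.mul_apply] using this
  have pdwW : ∀ (k : ℕ) (x : V),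
      dw ((w ^ (k + 1)) x) = (w ^ (k + 1)) (dw x) + ((k : ℝ) + 1) • (w ^ k) x := by
    intro k x
    have := DFunLike.congr_fun (hdwW k) x
    simpa [Module.End.mul_apply, LinearMap.add_apply, LinearMap.smul_apply] using this
  have pEE : ∀ (k : ℕ) (x : V),
      ew (((ew * D) ^ (k + 1)) x) = D (((ew * D) ^ k) x) := by
    intro k x
    have hop : ew * (ew * D) ^ (k + 1) = D * (ew * D) ^ k := by
      rw [pow_succ', ← mul_assoc, ← mul_assoc, hew2, one_mul]
    have := DFunLike.congr_fun hop x
    simpa [Module.End.mul_apply] using this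
  -- D^{n+1} p = 0 kills the top term
  have zkill : ∀ (k : ℕ) (q : V), (D ^ (k + 1)) q = 0 → ((ew * D) ^ k) (D q) = 0 := by
    intro k
    induction k with
    | zero =>
      intro q hq
      simpa using hq
    | succ b ih =>
      intro q hq
      have hq2 : (D ^ (b + 1)) (ew (D q)) = 0 := by
        have h1 := DFunLike.congr_fun (hDkew (b + 1)) (D q)
        simp only [Module.End.mul_apply, LinearMap.smul_apply] at h1
        have h2 : (D ^ (b + 1)) (D q) = (D ^ (b + 2)) q := by
          have : D ^ (b + 1) * D = D ^ (b + 2) := by rw [← pow_succ]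
          have := DFunLike.congr_fun this q
          simpa [Module.End.mul_apply] using this
        rw [h1, h2, hq]
        simp
      have step : ((ew * D) ^ (b + 1)) (D q) = -(((ew * D) ^ b) (D (ew (D q)))) := by
        have hop : (ew * D) ^ (b + 1) = (ew * D) ^ b * (ew * D) := pow_succ _ _
        have h3 : (ew * D) (D q) = -(D (ew (D q))) := by
          have := DFunLike.congr_fun hewD (D q)
          simpa [Module.End.mul_apply] using this
        rw [hop]
        simp [Module.End.mul_apply, h3]
      rw [step, ih _ hq2, neg_zero]
  set g : ℕ → V := fun a => (w ^ a) (((ew * D) ^ a) (D p)) with hg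
  have key : ∀ a : ℕ,
      (D + ew * dw) (((-1 : ℝ) ^ a / (Nat.factorial a : ℝ)) • ((w ^ a * (ew * D) ^ a) p))
        = ((1 : ℝ) / (Nat.factorial a : ℝ)) • g a
          - ((a : ℝ) / (Nat.factorial a : ℝ)) • g (a - 1) := by
    intro a
    match a with
    | 0 =>
      simp [hg, LinearMap.add_apply, Module.End.mul_apply, hdwp]
    | b + 1 =>
      have hX : ((w ^ (b + 1) * (ew * D) ^ (b + 1)) p)
          = (w ^ (b + 1)) (((ew * D) ^ (b + 1)) p) := by
        simp [Module.End.mul_apply]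
      have hDX : D ((w ^ (b + 1) * (ew * D) ^ (b + 1)) p)
          = ((-1 : ℝ) ^ (b + 1)) • g (b + 1) := by
        rw [hX, pDw, pDalt, hg]
        simp [map_smul]
      have hdwX : dw ((w ^ (b + 1) * (ew * D) ^ (b + 1)) p)
          = ((b : ℝ) + 1) • (w ^ b) (((ew * D) ^ (b + 1)) p) := by
        rw [hX, pdwW, pdwE, hdwp]
        simp
      have hewdwX : ew (dw ((w ^ (b + 1) * (ew * D) ^ (b + 1)) p))
          = (((b : ℝ) + 1) * (-1 : ℝ) ^ b) • g b := by
        rw [hdwX, map_smul, pEww, pEE, pDalt, hg]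
        simp [map_smul, smul_smul]
      have expand : (D + ew * dw) (((-1 : ℝ) ^ (b + 1) / (Nat.factorial (b + 1) : ℝ)) •
            ((w ^ (b + 1) * (ew * D) ^ (b + 1)) p))
          = ((-1 : ℝ) ^ (b + 1) / (Nat.factorial (b + 1) : ℝ)) •
            (D ((w ^ (b + 1) * (ew * D) ^ (b + 1)) p)
              + ew (dw ((w ^ (b + 1) * (ew * D) ^ (b + 1)) p))) := by
        simp [LinearMap.add_apply, Module.End.mul_apply, map_smul, smul_add]
      rw [expand, hDX, hewdwX, smul_add, smul_smul, smul_smul]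
      have c1 : (-1 : ℝ) ^ (b + 1) / (Nat.factorial (b + 1) : ℝ) * (-1 : ℝ) ^ (b + 1)
          = (1 : ℝ) / (Nat.factorial (b + 1) : ℝ) := by
        have : ((-1 : ℝ) ^ (b + 1)) * ((-1 : ℝ) ^ (b + 1)) = 1 := by
          rw [← mul_pow]; norm_num
        field_simp
        linarith [this]
      have c2 : (-1 : ℝ) ^ (b + 1) / (Nat.factorial (b + 1) : ℝ) * (((b : ℝ) + 1) * (-1 : ℝ) ^ b)
          = -(((b : ℝ) + 1) / (Nat.factorial (b + 1) : ℝ)) := by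
        have : ((-1 : ℝ) ^ (b + 1)) * ((-1 : ℝ) ^ b) = -1 := by
          rw [pow_succ]; rw [mul_comm ((-1:ℝ)^b) (-1:ℝ), mul_assoc, ← mul_pow]; norm_num
        field_simp
        nlinarith [this]
      rw [c1, c2]
      have hsub : ((b : ℕ) + 1 - 1) = b := by omega
      have hcast : ((b + 1 : ℕ) : ℝ) = (b : ℝ) + 1 := by push_cast; ring
      rw [hsub, hcast, neg_smul, sub_eq_add_neg]
  rw [map_sum]
  have hsum : ∑ a ∈ range (n + 1),
      (D + ew * dw) (((-1 : ℝ) ^ a / (Nat.factorial a : ℝ)) • ((w ^ a * (ew * D) ^ a) p))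
      = ∑ a ∈ range (n + 1),
        (((1 : ℝ) / (Nat.factorial a : ℝ)) • g a
          - ((a : ℝ) / (Nat.factorial a : ℝ)) • g (a - 1)) :=
    Finset.sum_congr rfl (fun a _ => key a)
  rw [hsum, Finset.sum_sub_distrib]
  have h2 : ∑ a ∈ range (n + 1), ((a : ℝ) / (Nat.factorial a : ℝ)) • g (a - 1)
      = ∑ b ∈ range n, ((1 : ℝ) / (Nat.factorial b : ℝ)) • g b := by
    rw [Finset.sum_range_succ']
    simp only [Nat.cast_zero, zero_div, zero_smul, add_zero]
    refine Finset.sum_congr rfl fun b _ => ?_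
    have : ((b + 1 : ℕ) : ℝ) / (Nat.factorial (b + 1) : ℝ) = 1 / (Nat.factorial b : ℝ) := by
      rw [Nat.factorial_succ]
      push_cast
      rw [div_eq_div_iff (by positivity) (by positivity)]
      ring
    rw [this]
    congr 1
  rw [h2, Finset.sum_range_succ, add_sub_cancel_left]
  have : ((ew * D) ^ n) (D p) = 0 := zkill n p hDp
  rw [hg]
  simp [this]
end

section
/- In the algebra 𝒜 of the previous context, with O₀, O₊, O₋, N₊, N₋ defined as stated, one has [O₊, O₋] = 2O₀ + κ²[N₊, N₋]. -/
open Complex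

noncomputable def ω : ℂ := Complex.exp (2 * Real.pi * Complex.I / 3)

lemma omega_cube : ω ^ 3 = 1 := by
  rw [ω, ← Complex.exp_nat_mul]
  rw [show (3:ℕ) * (2 * (Real.pi:ℂ) * Complex.I / 3) = 2 * Real.pi * Complex.I by push_cast; ring]
  exact Complex.exp_two_pi_mul_I

lemma omega_val : ω = (-1 + (Real.sqrt 3 : ℂ) * Complex.I) / 2 := by
  have h : (2 * (Real.pi:ℂ) * Complex.I / 3) = ((2 * Real.pi / 3 : ℝ) : ℂ) * Complex.I := by
    push_cast; ring
  rw [ω, h, Complex.exp_mul_I, ← Complex.ofReal_cos, ← Complex.ofReal_sin]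
  have hc : Real.cos (2 * Real.pi / 3) = -(1/2) := by
    rw [show 2 * Real.pi / 3 = Real.pi - Real.pi / 3 by ring, Real.cos_pi_sub,
      Real.cos_pi_div_three]
  have hs : Real.sin (2 * Real.pi / 3) = Real.sqrt 3 / 2 := by
    rw [show 2 * Real.pi / 3 = Real.pi - Real.pi / 3 by ring, Real.sin_pi_sub,
      Real.sin_pi_div_three]
  rw [hc, hs]; push_cast; ring

lemma sqrt3_sq : ((Real.sqrt 3 : ℝ) : ℂ) ^ 2 = 3 := by
  rw [← Complex.ofReal_pow, Real.sq_sqrt (by norm_num : (3:ℝ) ≥ 0)]; norm_num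

lemma omega_d : ω ^ 2 - ω = -((Real.sqrt 3 : ℂ) * Complex.I) := by
  rw [omega_val]
  linear_combination (Complex.I^2/4) * sqrt3_sq + (3/4) * Complex.I_sq

lemma sqrt23_sq : ((Real.sqrt (2/3) : ℝ) : ℂ) ^ 2 = 2/3 := by
  rw [← Complex.ofReal_pow, Real.sq_sqrt (by norm_num : (2/3:ℝ) ≥ 0)]; norm_num

lemma comm_expand {A : Type*} [Ring A] [Algebra ℂ A] (X Y Z : A) :
    (X + ω • Y + ω ^ 2 • Z) * (X + ω ^ 2 • Y + ω • Z)
      - (X + ω ^ 2 • Y + ω • Z) * (X + ω • Y + ω ^ 2 • Z)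
    = (ω ^ 2 - ω) • ((X * Y - Y * X) - (X * Z - Z * X) + (Y * Z - Z * Y)) := by
  have h4 : ω ^ 2 * ω ^ 2 = ω := by linear_combination ω * omega_cube
  have h5 : ω * ω ^ 2 = 1 := by linear_combination omega_cube
  have h6 : ω ^ 2 * ω = 1 := by linear_combination omega_cube
  simp only [mul_add, add_mul, smul_mul_assoc, mul_smul_comm, smul_smul, h4, h5, h6, sub_smul,
    smul_sub, smul_add, one_smul]
  module

theorem Op_Om_commutator {A : Type*} [Ring A] [Algebra ℂ A] (κ : ℝ)
    (O12 O23 O31 O123 G12 G23 G31 : A)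
    (hc1 : O123 * O12 = O12 * O123) (hc2 : O123 * O23 = O23 * O123)
    (hc3 : O123 * O31 = O31 * O123)
    (hc4 : O123 * G12 = G12 * O123) (hc5 : O123 * G23 = G23 * O123)
    (hc6 : O123 * G31 = G31 * O123)
    (hG1 : G12 * G12 = 1) (hG2 : G23 * G23 = 1) (hG3 : G31 * G31 = 1)
    (hGc1 : G12 * G23 * G12 = G31) (hGc2 : G23 * G31 * G23 = G12)
    (hGc3 : G31 * G12 * G31 = G23)
    (hA1 : G12 * O12 = -(O12 * G12)) (hA2 : G12 * O23 = -(O31 * G12))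
    (hA3 : G12 * O31 = -(O23 * G12))
    (hB1 : G23 * O23 = -(O23 * G23)) (hB2 : G23 * O31 = -(O12 * G23))
    (hB3 : G23 * O12 = -(O31 * G23))
    (hC1 : G31 * O31 = -(O31 * G31)) (hC2 : G31 * O12 = -(O23 * G31))
    (hC3 : G31 * O23 = -(O12 * G31))
    (hR1 : O12 * O31 - O31 * O12 =
      O23 + ((Real.sqrt 2 * κ : ℝ) : ℂ) • (O123 * (G12 - G31)) +
        ((3 * κ ^ 2 / 2 : ℝ) : ℂ) • (G12 * G23 - G23 * G12))
    (hR2 : O23 * O12 - O12 * O23 =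
      O31 + ((Real.sqrt 2 * κ : ℝ) : ℂ) • (O123 * (G23 - G12)) +
        ((3 * κ ^ 2 / 2 : ℝ) : ℂ) • (G12 * G23 - G23 * G12))
    (hR3 : O31 * O23 - O23 * O31 =
      O12 + ((Real.sqrt 2 * κ : ℝ) : ℂ) • (O123 * (G31 - G23)) +
        ((3 * κ ^ 2 / 2 : ℝ) : ℂ) • (G12 * G23 - G23 * G12)) :
    let O0 := (-Complex.I / (Real.sqrt 3 : ℂ)) • (O12 + O23 + O31)
    let Op := (-Complex.I * (Real.sqrt (2/3) : ℂ)) • (O12 + ω • O23 + ω ^ 2 • O31)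
    let Om := (-Complex.I * (Real.sqrt (2/3) : ℂ)) • (O12 + ω ^ 2 • O23 + ω • O31)
    let Np := G12 + ω • G23 + ω ^ 2 • G31
    let Nm := G12 + ω ^ 2 • G23 + ω • G31
    Op * Om - Om * Op = (2 : ℂ) • O0 + ((κ ^ 2 : ℝ) : ℂ) • (Np * Nm - Nm * Np) := by
  intro O0 Op Om Np Nm
  -- G-product relations
  have hP1 : G31 * G12 = G12 * G23 := by
    rw [← hGc1, mul_assoc (G12 * G23), hG1, mul_one]
  have hQ1 : G12 * G31 = G23 * G12 := by
    rw [← hGc1, ← mul_assoc, ← mul_assoc, hG1, one_mul]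
  have hP2 : G23 * G31 = G12 * G23 := by
    rw [← hGc2, mul_assoc (G23 * G31), hG2, mul_one]
  have hQ2 : G31 * G23 = G23 * G12 := by
    rw [← hGc2, ← mul_assoc, ← mul_assoc, hG2, one_mul]
  -- rearranged commutation relations
  have hcomm2 : O12 * O23 - O23 * O12 =
      -(O31 + ((Real.sqrt 2 * κ : ℝ) : ℂ) • (O123 * (G23 - G12)) +
        ((3 * κ ^ 2 / 2 : ℝ) : ℂ) • (G12 * G23 - G23 * G12)) := by
    rw [← hR2]; abel
  have hcomm3 : O23 * O31 - O31 * O23 =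
      -(O12 + ((Real.sqrt 2 * κ : ℝ) : ℂ) • (O123 * (G31 - G23)) +
        ((3 * κ ^ 2 / 2 : ℝ) : ℂ) • (G12 * G23 - G23 * G12)) := by
    rw [← hR3]; abel
  have key3 : (O12 * O23 - O23 * O12) - (O12 * O31 - O31 * O12) + (O23 * O31 - O31 * O23)
      = -(O12 + O23 + O31) - ((3 * κ ^ 2 / 2 : ℝ) : ℂ) • ((3:ℂ) • (G12 * G23 - G23 * G12)) := by
    rw [hcomm2, hR1, hcomm3]
    simp only [mul_sub, smul_sub, smul_add, smul_smul]
    module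
  have key4 : (G12 * G23 - G23 * G12) - (G12 * G31 - G31 * G12) + (G23 * G31 - G31 * G23)
      = (3:ℂ) • (G12 * G23 - G23 * G12) := by
    rw [hQ1, hP1, hP2, hQ2]; module
  have keyN : Np * Nm - Nm * Np = (ω ^ 2 - ω) • ((3:ℂ) • (G12 * G23 - G23 * G12)) := by
    show (G12 + ω • G23 + ω ^ 2 • G31) * (G12 + ω ^ 2 • G23 + ω • G31)
      - (G12 + ω ^ 2 • G23 + ω • G31) * (G12 + ω • G23 + ω ^ 2 • G31) = _
    rw [comm_expand, key4]
  have haa : (-Complex.I * (Real.sqrt (2/3) : ℂ)) * (-Complex.I * (Real.sqrt (2/3) : ℂ))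
      = (-(2/3) : ℂ) := by
    linear_combination (Complex.I^2) * sqrt23_sq + (2/3) * Complex.I_sq
  have keyO : Op * Om - Om * Op =
      ((-(2/3) : ℂ)) •
        ((ω ^ 2 - ω) • (-(O12 + O23 + O31)
          - ((3 * κ ^ 2 / 2 : ℝ) : ℂ) • ((3:ℂ) • (G12 * G23 - G23 * G12)))) := by
    show ((-Complex.I * (Real.sqrt (2/3) : ℂ)) • (O12 + ω • O23 + ω ^ 2 • O31)) *
        ((-Complex.I * (Real.sqrt (2/3) : ℂ)) • (O12 + ω ^ 2 • O23 + ω • O31)) -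
        ((-Complex.I * (Real.sqrt (2/3) : ℂ)) • (O12 + ω ^ 2 • O23 + ω • O31)) *
        ((-Complex.I * (Real.sqrt (2/3) : ℂ)) • (O12 + ω • O23 + ω ^ 2 • O31)) = _
    rw [smul_mul_smul_comm, smul_mul_smul_comm, ← smul_sub, comm_expand, key3, haa]
  rw [keyO, keyN]
  show _ = (2:ℂ) • ((-Complex.I / (Real.sqrt 3 : ℂ)) • (O12 + O23 + O31)) + _
  rw [omega_d]
  have hs3 : ((Real.sqrt 3 : ℝ) : ℂ) ≠ 0 := by
    intro h
    have := sqrt3_sq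
    rw [h] at this; norm_num at this
  have hdiv : -Complex.I / ((Real.sqrt 3 : ℝ) : ℂ) = (-(1:ℂ)/3) * (Complex.I * ((Real.sqrt 3 : ℝ):ℂ)) := by
    rw [div_eq_iff hs3]
    linear_combination (Complex.I/3) * sqrt3_sq
  rw [hdiv]
  simp only [smul_add, smul_sub, smul_neg, smul_smul, neg_smul]
  match_scalars <;> ring
  done
end
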